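/- arXiv:2210.14097 — 3 statements merged into one kernel-verified Lean document; each statement's English description precedes it below -/
import Mathlib

section
/- Suppose that G is a graph on n vertices and that U ⊆ V(G) is a set of m vertices. Then the cut distance between G and its induced subgraph G[U] satisfies δ_□(G, G[U]) ≤ 2(1 − m/n). -/
open MeasureTheory

noncomputable section

/-- A graphon: a symmetric measurable kernel with values in `[0,1]`. -/
def IsGraphon {Ω : Type*} [MeasurableSpace Ω] (W : Ω → Ω → ℝ) : Prop :=
  Measurable (Function.uncurry W) ∧ (∀ x y, W x y = W y x) ∧
    ∀ x y, W x y ∈ Set.Icc (0 : ℝ) 1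

open scoped Classical in
/-- Homomorphism density `t(T,W)` of a finite graph `T` in a kernel `W` on `(Ω,π)`. -/
def homDensity {Ω : Type*} [MeasurableSpace Ω] (π : Measure Ω) (W : Ω → Ω → ℝ)
    {k : ℕ} (T : SimpleGraph (Fin k)) : ℝ :=
  ∫ x : Fin k → Ω,
    ∏ p ∈ Finset.univ.filter (fun p : Fin k × Fin k => p.1 < p.2 ∧ T.Adj p.1 p.2),
      W (x p.1) (x p.2) ∂(Measure.pi fun _ => π)

/-- Two graphons are fractionally isomorphic if all tree homomorphism densities agree. -/
def FracIsoGraphons {Λ Ω : Type*} [MeasurableSpace Λ] [MeasurableSpace Ω]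
    (ν : Measure Λ) (U : Λ → Λ → ℝ) (π : Measure Ω) (W : Ω → Ω → ℝ) : Prop :=
  ∀ (k : ℕ) (T : SimpleGraph (Fin k)), T.IsTree → homDensity ν U T = homDensity π W T

/-- The cut norm `‖W‖_□` of a kernel `W` on `(Ω,π)`. -/
def cutNorm {Ω : Type*} [MeasurableSpace Ω] (π : Measure Ω) (W : Ω → Ω → ℝ) : ℝ :=
  ⨆ p : {q : Set Ω × Set Ω // MeasurableSet q.1 ∧ MeasurableSet q.2},
    |∫ z in p.1.1 ×ˢ p.1.2, W z.1 z.2 ∂(π.prod π)|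

/-- The cut distance `δ_□(U,W)` between `U` on `(Λ,ν)` and `W` on `(Ω,π)`:
the infimum over measure-preserving bijections `φ : Ω → Λ` of `‖U∘(φ×φ) − W‖_□`. -/
def cutDist {Λ Ω : Type*} [MeasurableSpace Λ] [MeasurableSpace Ω]
    (ν : Measure Λ) (U : Λ → Λ → ℝ) (π : Measure Ω) (W : Ω → Ω → ℝ) : ℝ :=
  ⨅ φ : {ψ : Ω ≃ᵐ Λ // MeasurePreserving ψ π ν},
    cutNorm π fun x y => U (φ.1 x) (φ.1 y) - W x y

/-- The uniform probability measure on `[0,1) ⊆ ℝ`. -/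
def graphMeasure : Measure ℝ := volume.restrict (Set.Ico (0 : ℝ) 1)

/-- The step-graphon representation `W_G` of a finite graph `G`, as a kernel on
`(ℝ, graphMeasure)`: the space is split into `|V(G)|` intervals of measure `1/|V(G)|`,
and `W_G = 1` on `Ω_u × Ω_v` iff `uv` is an edge. -/
def graphRep {V : Type*} [Fintype V] (G : SimpleGraph V) : ℝ → ℝ → ℝ := fun x y =>
  Set.indicator
    {p : ℝ × ℝ | ∃ u v : V, G.Adj u v ∧
      p.1 ∈ Set.Ico (((Fintype.equivFin V u : ℕ) : ℝ) / (Fintype.card V))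
        ((((Fintype.equivFin V u : ℕ) : ℝ) + 1) / (Fintype.card V)) ∧
      p.2 ∈ Set.Ico (((Fintype.equivFin V v : ℕ) : ℝ) / (Fintype.card V))
        ((((Fintype.equivFin V v : ℕ) : ℝ) + 1) / (Fintype.card V))}
    (fun _ => 1) (x, y)

/-- Cut distance `δ_□(U,G) := δ_□(U, W_G)` between a graphon and a finite graph. -/
def cutDistToGraph {Λ : Type*} [MeasurableSpace Λ] (ν : Measure Λ) (U : Λ → Λ → ℝ)
    {V : Type*} [Fintype V] (G : SimpleGraph V) : ℝ :=
  cutDist ν U graphMeasure (graphRep G)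

open scoped Classical in
/-- `deg_G(u;S)`: the number of neighbours of `u` inside `S`. -/
def degIn {V : Type*} (G : SimpleGraph V) (u : V) (S : Finset V) : ℕ :=
  (S.filter fun v => G.Adj u v).card

/-- `P` is an equitable partition of `G` with parameters `(p, D)`: the parts are nonempty,
pairwise disjoint, cover the vertex set, `|P i| = p i`, and every vertex of `P i` has
exactly `D i j` neighbours in `P j` (in particular its degree into `P j` equals the
average degree into `P j` over `P i`). -/
def IsEquitablePartition {V : Type*} (G : SimpleGraph V)
    {k : ℕ} (P : Fin k → Finset V) (p : Fin k → ℕ) (D : Fin k → Fin k → ℕ) : Prop :=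
  (∀ i, (P i).Nonempty) ∧ (Pairwise fun i j => Disjoint (P i) (P j)) ∧
    (∀ v : V, ∃ i, v ∈ P i) ∧ (∀ i, (P i).card = p i) ∧
    ∀ i j, ∀ u ∈ P i, degIn G u (P j) = D i j

/-- Two finite graphs are fractionally isomorphic if they admit equitable partitions
with the same parameters. -/
def FracIsoGraphs {V V' : Type*} (G : SimpleGraph V) (H : SimpleGraph V') : Prop :=
  ∃ (k : ℕ) (P : Fin k → Finset V) (Q : Fin k → Finset V')
    (p : Fin k → ℕ) (D : Fin k → Fin k → ℕ),
      IsEquitablePartition G P p D ∧ IsEquitablePartition H Q p D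

/-- The generalized degree `deg_W(x;Y) = ∫_Y W(x,y) dπ(y)`. -/
def wdeg {Ω : Type*} [MeasurableSpace Ω] (π : Measure Ω) (W : Ω → Ω → ℝ)
    (x : Ω) (Y : Set Ω) : ℝ :=
  ∫ y in Y, W x y ∂π

/-- The density `d(C,D)` of a pair of sets in `W`. -/
def pairDensity {Ω : Type*} [MeasurableSpace Ω] (π : Measure Ω) (W : Ω → Ω → ℝ)
    (C D : Set Ω) : ℝ :=
  (∫ z in C ×ˢ D, W z.1 z.2 ∂(π.prod π)) / ((π C).toReal * (π D).toReal)

/-- `(C,D)` is a `δ`-regular pair in `W`. -/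
def IsRegularPair {Ω : Type*} [MeasurableSpace Ω] (π : Measure Ω) (W : Ω → Ω → ℝ)
    (δ : ℝ) (C D : Set Ω) : Prop :=
  ∀ C' D' : Set Ω, MeasurableSet C' → MeasurableSet D' → C' ⊆ C → D' ⊆ D →
    |(π C').toReal * (π D').toReal * pairDensity π W C D
        - ∫ z in C' ×ˢ D', W z.1 z.2 ∂(π.prod π)|
      ≤ δ * (π C).toReal * (π D).toReal

/-- `C` is elegant in `W`: almost every `x ∈ C` satisfies `deg_W(x;C) = π(C)·d(C)`. -/
def IsElegant {Ω : Type*} [MeasurableSpace Ω] (π : Measure Ω) (W : Ω → Ω → ℝ)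
    (C : Set Ω) : Prop :=
  ∀ᵐ x ∂(π.restrict C), wdeg π W x C = (π C).toReal * pairDensity π W C C

/-- A `β`-robust density matrix: symmetric, with entries either `0` or in `[β, 1−β]`. -/
def RobustDensityMatrix {M : ℕ} (β : ℝ) (𝒟 : Fin M → Fin M → ℝ) : Prop :=
  (∀ i j, 𝒟 i j = 𝒟 j i) ∧ ∀ i j, 𝒟 i j = 0 ∨ 𝒟 i j ∈ Set.Icc β (1 - β)

/-- A unit vector: entries in `[0,1]` summing to `1`. -/
def IsUnitVector {M : ℕ} (v : Fin M → ℝ) : Prop :=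
  (∀ i, v i ∈ Set.Icc (0 : ℝ) 1) ∧ ∑ i, v i = 1

/-- The `(β,λ,δ,α)`-Setup. -/
def Setup4 (β lam δ α : ℝ) : Prop :=
  0 < β ∧ 0 < lam ∧ 0 < δ ∧ 0 < α ∧
    β ≤ 1 / 1000 ∧ lam ≤ β ^ 3 / 1000 ∧ δ ≤ β ^ 2 * lam ^ 2 ∧
    β - α ∈ Set.Icc (20 * lam) (β ^ 3 / 5)

/-- The `(β,λ,δ,α,M,m)`-Setup. -/
def Setup6 (β lam δ α : ℝ) (M m : ℕ) : Prop :=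
  Setup4 β lam δ α ∧
    (10 : ℝ) ^ 4 * (M : ℝ) ^ 2 * (2 : ℝ) ^ ((10 : ℝ) ^ 3 / β ^ 2)
      / (β ^ 2 * lam ^ 3 * δ ^ 4) ≤ (m : ℝ)

end

/-!
Relabel `[0,1)` so that the picture of `G[U]` sits inside the picture of `G`. With `m = |U|`
and `n = |V|`, refine both step graphons to the grid of `m n` intervals of length `1/(mn)`.
The vertex `k` of `G[U]` owns the `m` fine intervals starting at `k/m`; an interval exchange,
which preserves Lebesgue measure, sends them onto the `m` fine intervals that make up the
interval of the same vertex in `G`. The two graphons then agree on `A × A`, where `A` is the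
union of these `m²` fine intervals and has measure `m/n`. Their difference is bounded by `1`, so
its cut norm is at most the measure of `(A × A)ᶜ`, which is at most `2(1 - m/n)`.
-/

noncomputable section

/-- For `N = |V|` and `b = Fintype.equivFin V u`, this is the interval `Ω_u` of `graphRep`. -/
def gridBlock (N b : ℕ) : Set ℝ := Set.Ico ((b : ℝ) / N) (((b : ℝ) + 1) / N)

section GridBlock

variable {N b : ℕ} {x : ℝ}

lemma floor_eq_of_mem_gridBlock (hx : x ∈ gridBlock N b) : ⌊x * N⌋₊ = b := by
  rcases N.eq_zero_or_pos with rfl | hN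
  · simp [gridBlock] at hx
  have hN' : (0 : ℝ) < N := Nat.cast_pos.mpr hN
  have h₁ : (b : ℝ) ≤ x * N := (div_le_iff₀ hN').mp hx.1
  exact (Nat.floor_eq_iff ((Nat.cast_nonneg b).trans h₁)).mpr ⟨h₁, (lt_div_iff₀ hN').mp hx.2⟩

lemma mem_gridBlock_floor (hN : 0 < N) (hx : 0 ≤ x) : x ∈ gridBlock N ⌊x * N⌋₊ := by
  have hN' : (0 : ℝ) < N := Nat.cast_pos.mpr hN
  exact ⟨(div_le_iff₀ hN').mpr (Nat.floor_le (by positivity)),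
    (lt_div_iff₀ hN').mpr (Nat.lt_floor_add_one _)⟩

lemma gridBlock_subset_Ico (hb : b < N) : gridBlock N b ⊆ Set.Ico 0 1 := by
  have hN' : (0 : ℝ) < N := Nat.cast_pos.mpr (by omega)
  refine Set.Ico_subset_Ico (by positivity) ((div_le_one hN').mpr ?_)
  exact_mod_cast hb

lemma floor_lt_of_mem_Ico (hN : 0 < N) (hx : x ∈ Set.Ico (0 : ℝ) 1) : ⌊x * N⌋₊ < N := by
  have hN' : (0 : ℝ) < N := Nat.cast_pos.mpr hN
  exact (Nat.floor_lt (by nlinarith [hx.1])).mpr (by nlinarith [hx.2])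

lemma pairwise_disjoint_gridBlock (N : ℕ) : Pairwise (Function.onFun Disjoint (gridBlock N)) :=
  fun _ _ hbc => Set.disjoint_left.mpr fun _ hb hc =>
    hbc ((floor_eq_of_mem_gridBlock hb).symm.trans (floor_eq_of_mem_gridBlock hc))

lemma iUnion_gridBlock (hN : 0 < N) : ⋃ i : Fin N, gridBlock N i = Set.Ico 0 1 := by
  refine subset_antisymm (Set.iUnion_subset fun i => gridBlock_subset_Ico i.isLt) fun x hx => ?_
  exact Set.mem_iUnion.mpr ⟨⟨_, floor_lt_of_mem_Ico hN hx⟩, mem_gridBlock_floor hN hx.1⟩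

lemma volume_gridBlock (N b : ℕ) : volume (gridBlock N b) = ENNReal.ofReal (1 / N) := by
  rw [gridBlock, Real.volume_Ico, add_div, add_sub_cancel_left]

lemma preimage_add_gridBlock (N b c : ℕ) :
    (· + ((c : ℝ) - b) / N) ⁻¹' gridBlock N c = gridBlock N b := by
  rw [gridBlock, Set.preimage_add_const_Ico, gridBlock]
  congr 1 <;> ring

lemma gridBlock_finProdFinEquiv_subset {m n : ℕ} (p : Fin m × Fin n) :
    gridBlock (m * n) (finProdFinEquiv p) ⊆ gridBlock m p.1 := by
  obtain ⟨k, r⟩ := p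
  have hm : (0 : ℝ) < m := Nat.cast_pos.mpr k.pos
  have hn : (0 : ℝ) < n := Nat.cast_pos.mpr r.pos
  have hr : (r : ℝ) + 1 ≤ n := by exact_mod_cast r.isLt
  refine Set.Ico_subset_Ico ?_ ?_ <;>
    simp only [finProdFinEquiv_apply_val, Nat.cast_add, Nat.cast_mul] <;>
    rw [div_le_div_iff₀ (by positivity) (by positivity)] <;> nlinarith [r.val.cast_nonneg (α := ℝ)]

end GridBlock

/-- Translates `gridBlock N i` onto `gridBlock N (σ i)` for every `i : Fin N`; the identity
off `[0,1)`. -/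
def intervalExchange {N : ℕ} (σ : Equiv.Perm (Fin N)) (x : ℝ) : ℝ :=
  if 0 ≤ x then x + Function.extend Fin.val (fun i => ((σ i : ℝ) - i) / N) 0 ⌊x * N⌋₊ else x

section IntervalExchange

variable {N : ℕ} (σ : Equiv.Perm (Fin N)) {x : ℝ}

lemma intervalExchange_of_mem_gridBlock {i : Fin N} (hx : x ∈ gridBlock N i) :
    intervalExchange σ x = x + ((σ i : ℝ) - i) / N := by
  have hx₀ : 0 ≤ x := le_trans (by positivity) hx.1
  rw [intervalExchange, if_pos hx₀, floor_eq_of_mem_gridBlock hx,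
    Fin.val_injective.extend_apply]

lemma intervalExchange_mem_gridBlock {i : Fin N} (hx : x ∈ gridBlock N i) :
    intervalExchange σ x ∈ gridBlock N (σ i) := by
  rw [intervalExchange_of_mem_gridBlock σ hx]
  rwa [← Set.mem_preimage (f := (· + _)), preimage_add_gridBlock]

lemma intervalExchange_of_forall_notMem (hx : ∀ i : Fin N, x ∉ gridBlock N i) :
    intervalExchange σ x = x := by
  rw [intervalExchange]
  split_ifs with hx₀
  · rw [Function.extend_apply' _ _ _ ?_, Pi.zero_apply, add_zero]
    rintro ⟨i, hi⟩
    exact hx i (hi ▸ mem_gridBlock_floor (Nat.zero_lt_of_lt i.isLt) hx₀)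
  · rfl

lemma intervalExchange_symm_apply (x : ℝ) :
    intervalExchange σ.symm (intervalExchange σ x) = x := by
  by_cases hx : ∃ i : Fin N, x ∈ gridBlock N i
  · obtain ⟨i, hi⟩ := hx
    rw [intervalExchange_of_mem_gridBlock σ.symm (intervalExchange_mem_gridBlock σ hi),
      intervalExchange_of_mem_gridBlock σ hi, Equiv.symm_apply_apply]
    ring
  · simp only [not_exists] at hx
    rw [intervalExchange_of_forall_notMem σ hx, intervalExchange_of_forall_notMem σ.symm hx]

lemma measurable_intervalExchange : Measurable (intervalExchange σ) := by
  have hfloor : Measurable fun x : ℝ => ⌊x * N⌋₊ := by fun_prop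
  refine Measurable.ite measurableSet_Ici (measurable_id.add ?_) measurable_id
  exact Measurable.comp (g := Function.extend _ _ _) measurable_from_nat hfloor

def intervalExchangeEquiv : ℝ ≃ᵐ ℝ where
  toFun := intervalExchange σ
  invFun := intervalExchange σ.symm
  left_inv := intervalExchange_symm_apply σ
  right_inv x := by simpa using intervalExchange_symm_apply σ.symm x
  measurable_toFun := measurable_intervalExchange σ
  measurable_invFun := measurable_intervalExchange σ.symm

instance : IsProbabilityMeasure graphMeasure :=
  ⟨by rw [graphMeasure, Measure.restrict_apply_univ, Real.volume_Ico, sub_zero,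
    ENNReal.ofReal_one]⟩

lemma graphMeasure_eq_sum_gridBlock (hN : 0 < N) :
    graphMeasure = Measure.sum fun i : Fin N => volume.restrict (gridBlock N i) := by
  rw [graphMeasure, ← iUnion_gridBlock hN]
  exact Measure.restrict_iUnion
    (fun i j hij => pairwise_disjoint_gridBlock N (Fin.val_injective.ne hij))
    fun _ => measurableSet_Ico

lemma map_intervalExchange_restrict_gridBlock (i : Fin N) :
    (volume.restrict (gridBlock N i)).map (intervalExchange σ) =
      volume.restrict (gridBlock N (σ i)) := by
  have htrans : (volume.restrict (gridBlock N i)).map (intervalExchange σ) =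
      (volume.restrict (gridBlock N i)).map (· + ((σ i : ℝ) - i) / N) :=
    Measure.map_congr (ae_restrict_of_forall_mem measurableSet_Ico
      fun _ hx => intervalExchange_of_mem_gridBlock σ hx)
  rw [htrans, ← preimage_add_gridBlock, ← (measurableEmbedding_addRight _).restrict_map,
    map_add_right_eq_self]

lemma measurePreserving_intervalExchange :
    MeasurePreserving (intervalExchange σ) graphMeasure graphMeasure := by
  refine ⟨measurable_intervalExchange σ, ?_⟩
  rcases N.eq_zero_or_pos with rfl | hN
  · have hid : intervalExchange σ = id := funext fun x =>
      intervalExchange_of_forall_notMem σ fun i => i.elim0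
    rw [hid, Measure.map_id]
  rw [graphMeasure_eq_sum_gridBlock hN,
    Measure.map_sum (measurable_intervalExchange σ).aemeasurable]
  simp_rw [map_intervalExchange_restrict_gridBlock]
  exact Measure.sum_comp_equiv σ fun i => volume.restrict (gridBlock N i)

end IntervalExchange

section GraphRep

variable {V : Type*} [Fintype V] (G : SimpleGraph V)

lemma graphRep_eq_of_mem_gridBlock [DecidableRel G.Adj] {u v : V} {x y : ℝ}
    (hx : x ∈ gridBlock (Fintype.card V) (Fintype.equivFin V u))
    (hy : y ∈ gridBlock (Fintype.card V) (Fintype.equivFin V v)) :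
    graphRep G x y = if G.Adj u v then 1 else 0 := by
  rw [graphRep, Set.indicator_apply]
  congr 1
  refine propext ⟨fun ⟨u', v', huv, hu', hv'⟩ => ?_, fun huv => ⟨u, v, huv, hx, hy⟩⟩
  have hu : u = u' := (Fintype.equivFin V).injective <| Fin.ext <|
    (floor_eq_of_mem_gridBlock hx).symm.trans (floor_eq_of_mem_gridBlock (b := _) hu')
  have hv : v = v' := (Fintype.equivFin V).injective <| Fin.ext <|
    (floor_eq_of_mem_gridBlock hy).symm.trans (floor_eq_of_mem_gridBlock (b := _) hv')
  exact hu ▸ hv ▸ huv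

lemma isGraphon_graphRep : IsGraphon (graphRep G) := by
  classical
  refine ⟨?_, fun x y => ?_, fun x y => ?_⟩
  · set B : V → Set ℝ := fun u => gridBlock (Fintype.card V) (Fintype.equivFin V u)
    have hsupp : {p : ℝ × ℝ | ∃ u v, G.Adj u v ∧ p.1 ∈ B u ∧ p.2 ∈ B v} =
        ⋃ u, ⋃ v, ⋃ (_ : G.Adj u v), B u ×ˢ B v := by
      ext
      simp only [Set.mem_ofPred_eq, Set.mem_iUnion, Set.mem_prod, exists_prop]
    refine measurable_const.indicator ?_
    exact hsupp ▸ .iUnion fun u => .iUnion fun v => .iUnion fun _ =>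
      measurableSet_Ico.prod measurableSet_Ico
  · rw [graphRep, graphRep, Set.indicator_apply, Set.indicator_apply]
    congr 1
    exact propext ⟨fun ⟨u, v, huv, hx, hy⟩ => ⟨v, u, huv.symm, hy, hx⟩,
      fun ⟨u, v, huv, hy, hx⟩ => ⟨v, u, huv.symm, hx, hy⟩⟩
  · rw [graphRep, Set.indicator_apply]
    split_ifs <;> norm_num

end GraphRep

lemma IsGraphon.comp {Λ Ω : Type*} [MeasurableSpace Λ] [MeasurableSpace Ω] {U : Λ → Λ → ℝ}
    (hU : IsGraphon U) {φ : Ω → Λ} (hφ : Measurable φ) : IsGraphon fun x y => U (φ x) (φ y) :=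
  ⟨hU.1.comp (hφ.prodMap hφ), fun _ _ => hU.2.1 _ _, fun _ _ => hU.2.2 _ _⟩

section CutNorm

variable {Λ Ω : Type*} [MeasurableSpace Λ] [MeasurableSpace Ω]

lemma cutNorm_nonneg (π : Measure Ω) (W : Ω → Ω → ℝ) : 0 ≤ cutNorm π W :=
  Real.iSup_nonneg fun _ => abs_nonneg _

lemma cutDist_le_cutNorm (ν : Measure Λ) (U : Λ → Λ → ℝ) (π : Measure Ω) (W : Ω → Ω → ℝ)
    (φ : Ω ≃ᵐ Λ) (hφ : MeasurePreserving φ π ν) :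
    cutDist ν U π W ≤ cutNorm π fun x y => U (φ x) (φ y) - W x y :=
  ciInf_le (f := fun ψ : {ψ : Ω ≃ᵐ Λ // MeasurePreserving ψ π ν} =>
      cutNorm π fun x y => U (ψ.1 x) (ψ.1 y) - W x y)
    ⟨0, Set.forall_mem_range.mpr fun _ => cutNorm_nonneg _ _⟩ ⟨φ, hφ⟩

lemma cutNorm_sub_le_of_eqOn {π : Measure Ω} [IsProbabilityMeasure π] {U W : Ω → Ω → ℝ}
    (hU : IsGraphon U) (hW : IsGraphon W) {A : Set Ω} (hA : MeasurableSet A)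
    (hUW : ∀ x ∈ A, ∀ y ∈ A, U x y = W x y) :
    cutNorm π (fun x y => U x y - W x y) ≤ 2 * π.real Aᶜ := by
  refine Real.iSup_le (fun ⟨⟨S, T⟩, _⟩ => ?_) (by positivity)
  set D : Ω × Ω → ℝ := fun z => U z.1 z.2 - W z.1 z.2
  have hD : D = (A ×ˢ A)ᶜ.indicator D := by
    ext z
    by_cases hz : z ∈ A ×ˢ A
    · simp [D, hz, hUW z.1 hz.1 z.2 hz.2]
    · simp [hz]
  have hD_le : ∀ z, ‖D z‖ ≤ 1 := fun z =>
    abs_sub_le_of_nonneg_of_le (hU.2.2 _ _).1 (hU.2.2 _ _).2 (hW.2.2 _ _).1 (hW.2.2 _ _).2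
  calc |∫ z in S ×ˢ T, D z ∂π.prod π|
      = ‖∫ z in S ×ˢ T ∩ (A ×ˢ A)ᶜ, D z ∂π.prod π‖ := by
        rw [← setIntegral_indicator (hA.prod hA).compl, ← hD, Real.norm_eq_abs]
    _ ≤ 1 * (π.prod π).real (S ×ˢ T ∩ (A ×ˢ A)ᶜ) :=
        norm_setIntegral_le_of_norm_le_const (measure_lt_top _ _) fun z _ => hD_le z
    _ ≤ (π.prod π).real (A ×ˢ A)ᶜ := by
        rw [one_mul]
        exact measureReal_mono Set.inter_subset_right
    _ ≤ π.real Aᶜ + π.real Aᶜ := by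
        rw [Set.compl_prod_eq_union]
        refine (measureReal_union_le _ _).trans_eq ?_
        simp [measureReal_prod_prod]
    _ = 2 * π.real Aᶜ := by ring

lemma cutDist_le_of_eqOn {ν : Measure Λ} {π : Measure Ω} [IsProbabilityMeasure π]
    {U : Λ → Λ → ℝ} {W : Ω → Ω → ℝ} (hU : IsGraphon U) (hW : IsGraphon W)
    (φ : Ω ≃ᵐ Λ) (hφ : MeasurePreserving φ π ν) {A : Set Ω} (hA : MeasurableSet A)
    (hUW : ∀ x ∈ A, ∀ y ∈ A, U (φ x) (φ y) = W x y) :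
    cutDist ν U π W ≤ 2 * π.real Aᶜ :=
  (cutDist_le_cutNorm ν U π W φ hφ).trans
    (cutNorm_sub_le_of_eqOn (hU.comp φ.measurable) hW hA hUW)

end CutNorm

lemma graphMeasure_real_iUnion_gridBlock {ι : Type*} [Fintype ι] {N : ℕ} {b : ι → Fin N}
    (hb : Function.Injective b) :
    graphMeasure.real (⋃ i, gridBlock N (b i)) = Fintype.card ι / N := by
  have hblock (i : ι) : graphMeasure.real (gridBlock N (b i)) = 1 / N := by
    rw [measureReal_def, graphMeasure, Measure.restrict_apply' measurableSet_Ico,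
      Set.inter_eq_left.mpr (gridBlock_subset_Ico (b i).isLt), volume_gridBlock,
      ENNReal.toReal_ofReal (by positivity)]
  rw [measureReal_iUnion_fintype (f := fun i => gridBlock N (b i))
    (fun i j hij => pairwise_disjoint_gridBlock N (Fin.val_injective.ne (hb.ne hij)))
    fun _ => measurableSet_Ico]
  simp only [hblock, Finset.sum_const, Finset.card_univ, nsmul_eq_mul]
  ring

lemma exists_intervalExchange_mapsTo_gridBlock {m n : ℕ} {g : Fin m → Fin n}
    (hg : Function.Injective g) (hmn : m ≤ n) :
    ∃ σ : Equiv.Perm (Fin (m * n)), ∀ k r : Fin m,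
      ∀ x ∈ gridBlock (m * n) (finProdFinEquiv (k, Fin.castLE hmn r)),
        intervalExchange σ x ∈ gridBlock n (g k) := by
  set S : Fin m × Fin m → Fin (m * n) := fun p => finProdFinEquiv (p.1, Fin.castLE hmn p.2)
  set F : Fin m × Fin m → Fin (m * n) := fun p =>
    finCongr (Nat.mul_comm n m) (finProdFinEquiv (g p.1, p.2))
  have hS : Function.Injective S := fun p q h => by
    simpa [S, Prod.ext_iff, Fin.castLE_inj] using finProdFinEquiv.injective h
  have hF : Function.Injective F := fun p q h => by
    simpa [F, Prod.ext_iff, hg.eq_iff] using finProdFinEquiv.injective ((finCongr _).injective h)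
  obtain ⟨σ, hσ⟩ := Equiv.Perm.exists_extending_pair S F hS hF
  refine ⟨σ, fun k r x hx => ?_⟩
  have hσx := intervalExchange_mem_gridBlock σ hx
  rw [show σ _ = F (k, r) from hσ (k, r)] at hσx
  simp only [F, finCongr_apply, Fin.val_cast] at hσx
  rw [show gridBlock (m * n) = gridBlock (n * m) by rw [Nat.mul_comm]] at hσx
  exact gridBlock_finProdFinEquiv_subset _ hσx

lemma exists_measurePreserving_eqOn_graphRep_comap {W V : Type*} [Fintype W] [Fintype V]
    (G : SimpleGraph V) (f : W ↪ V) :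
    ∃ φ : ℝ ≃ᵐ ℝ, MeasurePreserving φ graphMeasure graphMeasure ∧
      ∃ A : Set ℝ, MeasurableSet A ∧
        graphMeasure.real A = Fintype.card W / Fintype.card V ∧
        ∀ x ∈ A, ∀ y ∈ A, graphRep G (φ x) (φ y) = graphRep (G.comap f) x y := by
  classical
  set m := Fintype.card W
  set n := Fintype.card V
  set eW := Fintype.equivFin W
  set eV := Fintype.equivFin V
  have hmn : m ≤ n := Fintype.card_le_of_embedding f
  have hg : Function.Injective fun k => eV (f (eW.symm k)) := by simp [Function.Injective]
  obtain ⟨σ, hσ⟩ := exists_intervalExchange_mapsTo_gridBlock hg hmn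
  set S : Fin m × Fin m → Fin (m * n) := fun p => finProdFinEquiv (p.1, Fin.castLE hmn p.2)
  have hS : Function.Injective S := fun p q h => by
    simpa [S, Prod.ext_iff, Fin.castLE_inj] using finProdFinEquiv.injective h
  have hmaps (p : Fin m × Fin m) {x : ℝ} (hx : x ∈ gridBlock (m * n) (S p)) :
      x ∈ gridBlock m (eW (eW.symm p.1)) ∧
        intervalExchange σ x ∈ gridBlock n (eV (f (eW.symm p.1))) :=
    ⟨by simpa using gridBlock_finProdFinEquiv_subset _ hx, hσ p.1 p.2 x hx⟩
  refine ⟨intervalExchangeEquiv σ, measurePreserving_intervalExchange σ,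
    ⋃ p, gridBlock (m * n) (S p), .iUnion fun _ => measurableSet_Ico, ?_, ?_⟩
  · rw [graphMeasure_real_iUnion_gridBlock hS, Fintype.card_prod, Fintype.card_fin]
    rcases eq_or_ne (m : ℝ) 0 with hm | hm
    · simp [hm]
    · push_cast
      exact mul_div_mul_left _ _ hm
  · intro x hx y hy
    obtain ⟨p, hp⟩ := Set.mem_iUnion.mp hx
    obtain ⟨q, hq⟩ := Set.mem_iUnion.mp hy
    obtain ⟨hx, hφx⟩ := hmaps p hp
    obtain ⟨hy, hφy⟩ := hmaps q hq
    change graphRep G (intervalExchange σ x) (intervalExchange σ y) = _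
    rw [graphRep_eq_of_mem_gridBlock G hφx hφy, graphRep_eq_of_mem_gridBlock _ hx hy]
    simp only [SimpleGraph.comap_adj]

end

theorem cutDist_induce_le_general {V : Type*} [Fintype V]
    (G : SimpleGraph V) (U : Finset V) :
    cutDist graphMeasure (graphRep G) graphMeasure
        (graphRep (SimpleGraph.induce (↑U : Set V) G))
      ≤ 2 * (1 - (U.card : ℝ) / (Fintype.card V)) := by
  obtain ⟨φ, hφ, A, hA, hA_real, hGA⟩ :=
    exists_measurePreserving_eqOn_graphRep_comap G (Function.Embedding.subtype (· ∈ (U : Set V)))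
  have hU : Fintype.card (U : Set V) = U.card := Fintype.card_coe U
  calc _ ≤ 2 * graphMeasure.real Aᶜ :=
        cutDist_le_of_eqOn (isGraphon_graphRep G) (isGraphon_graphRep _) φ hφ hA hGA
    _ = _ := by rw [probReal_compl_eq_one_sub hA, hA_real, hU]

/-- **Lemma (vertex deletion).** If `G` is a graph on `n` vertices and `U ⊆ V(G)` has `m`
vertices, then `δ_□(G, G[U]) ≤ 2(1 − m/n)`. -/
theorem cutDist_induce_le {V : Type*} [Fintype V] [DecidableEq V]
    (G : SimpleGraph V) (U : Finset V) :
    cutDist graphMeasure (graphRep G) graphMeasure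
        (graphRep (SimpleGraph.induce (↑U : Set V) G))
      ≤ 2 * (1 - (U.card : ℝ) / (Fintype.card V)) :=
  cutDist_induce_le_general G U
end

section
/- For each δ > 0 there exists M^reg(δ) ∈ ℕ such that for every standard probability space (Ω,ℬ,π) (possibly with atoms), every graphon W on Ω has a δ-regular partition into at most M^reg(δ) measurable parts; that is, there is a partition 𝒫 = {P_i}_{i∈[M]} of Ω with M ≤ M^reg(δ) such that Σ_{(*)} π(P_i)² + Σ_{(**)} π(P_i)π(P_j) ≤ δ, where (*) ranges over indices i ∈ [M] for which P_i is inelegant in W, and (**) ranges over ordered pairs (i,j) ∈ [M]² with i ≠ j for which (P_i,P_j) is not a δ-regular pair in W. -/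
open MeasureTheory

/-!
Energy increment. The energy of a partition `P` of `Ω` is
`∑_{i,j} (∫_{P i × P j} W)² / (π(P i) π(P j))`; it lies in `[0,1]` and, by Cauchy–Schwarz, does not
decrease under refinement. If the pairs that are not `δ`-regular carry weight more than `δ/2`,
refining every part by the witnesses of irregularity raises the energy by more than `δ³/2`, so
after at most `⌈2/δ³⌉` refinements, each multiplying the number of parts by a bounded amount,
the irregular weight is at most `δ/2`.

Elegance comes for free from the starting partition: embedding `Ω` into `ℝ` and cutting along the
distribution function gives boundedly many parts, each a single point (hence elegant) or of mass at
most `δ/2`. Refinement preserves this, so the inelegant parts contribute at most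
`δ/2 · ∑ π(P i) = δ/2`.
-/

open Set

lemma Set.preimage_prodMap_singleton {α β γ δ : Type*} (f : α → γ) (g : β → δ) (p : γ × δ) :
    Prod.map f g ⁻¹' {p} = (f ⁻¹' {p.1}) ×ˢ (g ⁻¹' {p.2}) := by
  rw [← Prod.mk.eta (p := p), ← singleton_prod_singleton, preimage_prod_map_prod]

lemma sq_sum_div_le_sum_sq_div_of_nonneg {ι : Type*} (s : Finset ι) (a m : ι → ℝ)
    (hm : ∀ i ∈ s, 0 ≤ m i) (ha : ∀ i ∈ s, m i = 0 → a i = 0) :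
    (∑ i ∈ s, a i) ^ 2 / ∑ i ∈ s, m i ≤ ∑ i ∈ s, a i ^ 2 / m i := by
  classical
  have hpos : ∀ i ∈ s.filter (m · ≠ 0), 0 < m i := fun i hi =>
    (hm i (Finset.mem_filter.1 hi).1).lt_of_ne' (Finset.mem_filter.1 hi).2
  have key := Finset.sq_sum_div_le_sum_sq_div _ a hpos
  rwa [Finset.sum_filter_of_ne fun i hi h => mt (ha i hi) h,
    Finset.sum_filter_of_ne fun i _ h => h,
    Finset.sum_filter_of_ne fun i _ h => by rintro hm0; simp [hm0] at h] at key

lemma add_sq_div_add_add_sq_mul_le {a b m n ε : ℝ} (hm : 0 ≤ m) (hn : 0 ≤ n)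
    (ha : m = 0 → a = 0) (hb : n = 0 → b = 0) (hε : 0 ≤ ε)
    (hdev : ε * (m + n) ≤ |m * ((a + b) / (m + n)) - a|) :
    (a + b) ^ 2 / (m + n) + ε ^ 2 * (m + n) ≤ a ^ 2 / m + b ^ 2 / n := by
  rcases hm.eq_or_lt with rfl | hm
  · simp only [ha rfl, zero_mul, zero_sub, abs_neg, zero_add, abs_zero, div_zero] at hdev ⊢
    nlinarith
  rcases hn.eq_or_lt with rfl | hn
  · simp only [hb rfl, add_zero, ne_eq, hm.ne', not_false_eq_true, mul_div_cancel₀,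
      sub_self, abs_zero, div_zero] at hdev ⊢
    nlinarith
  have hmn : 0 < m + n := by positivity
  have hdev' : m * ((a + b) / (m + n)) - a = (b * m - a * n) / (m + n) := by
    field_simp; ring
  rw [hdev', abs_div, abs_of_pos hmn, le_div_iff₀ hmn] at hdev
  have hgap : a ^ 2 / m + b ^ 2 / n - (a + b) ^ 2 / (m + n)
      = (b * m - a * n) ^ 2 / (m * n * (m + n)) := by
    field_simp; ring
  have hsq : (ε * (m + n) * (m + n)) ^ 2 ≤ (b * m - a * n) ^ 2 := by
    rw [← sq_abs (b * m - a * n)]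
    exact pow_le_pow_left₀ (by positivity) hdev 2
  have : ε ^ 2 * (m + n) ≤ (b * m - a * n) ^ 2 / (m * n * (m + n)) := by
    rw [le_div_iff₀ (by positivity)]
    nlinarith [mul_pos hm hn, sq_nonneg (m - n), sq_nonneg ε]
  linarith

section Energy

variable {α κ ι : Type*} [MeasurableSpace α] {μ : Measure α} [IsFiniteMeasure μ] {w : α → ℝ}

/-- `(∫_s w)² / μ(s)`: the contribution of `s` to the squared `L²`-norm of the conditional
expectation of `w` on a partition with `s` as one of its parts. -/
noncomputable def setEnergy (μ : Measure α) (w : α → ℝ) (s : Set α) : ℝ :=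
  (∫ x in s, w x ∂μ) ^ 2 / μ.real s

noncomputable def energy (μ : Measure α) (w : α → ℝ) [Fintype κ] (F : α → κ) : ℝ :=
  ∑ k, setEnergy μ w (F ⁻¹' {k})

omit [IsFiniteMeasure μ] in
lemma setEnergy_nonneg (s : Set α) : 0 ≤ setEnergy μ w s :=
  div_nonneg (sq_nonneg _) measureReal_nonneg

omit [IsFiniteMeasure μ] in
lemma energy_nonneg [Fintype κ] (F : α → κ) : 0 ≤ energy μ w F :=
  Finset.sum_nonneg fun _ _ => setEnergy_nonneg _

lemma setIntegral_eq_zero_of_measureReal_eq_zero {s : Set α} (h : μ.real s = 0) :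
    ∫ x in s, w x ∂μ = 0 :=
  setIntegral_measure_zero _ ((measureReal_eq_zero_iff (measure_ne_top μ s)).1 h)

lemma setEnergy_le_measureReal (hw : ∀ x, ‖w x‖ ≤ 1) (s : Set α) :
    setEnergy μ w s ≤ μ.real s := by
  have h := norm_setIntegral_le_of_norm_le_const (μ := μ) (s := s) (measure_lt_top μ s)
    fun x _ => hw x
  rw [one_mul, Real.norm_eq_abs] at h
  rcases measureReal_nonneg.eq_or_lt with h0 | h0
  · rw [setEnergy, ← h0, div_zero]
  · rw [setEnergy, div_le_iff₀ h0, ← sq_abs, sq]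
    exact mul_le_mul h h (abs_nonneg _) h0.le

lemma energy_le_measureReal_univ [Fintype κ] (hw : ∀ x, ‖w x‖ ≤ 1) {F : α → κ}
    (hF : ∀ k, MeasurableSet (F ⁻¹' {k})) : energy μ w F ≤ μ.real univ := by
  calc energy μ w F ≤ ∑ k, μ.real (F ⁻¹' {k}) :=
        Finset.sum_le_sum fun k _ => setEnergy_le_measureReal hw _
    _ = μ.real univ := by
        rw [sum_measureReal_preimage_singleton _ fun k _ => hF k, Finset.coe_univ, preimage_univ]

lemma setEnergy_preimage_le_sum (hw : Integrable w μ) {G : α → ι}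
    (hG : ∀ l, MeasurableSet (G ⁻¹' {l})) (L : Finset ι) :
    setEnergy μ w (G ⁻¹' L) ≤ ∑ l ∈ L, setEnergy μ w (G ⁻¹' {l}) := by
  have hd : (L : Set ι).PairwiseDisjoint fun l => G ⁻¹' {l} := pairwiseDisjoint_fiber G _
  rw [← Finset.set_biUnion_preimage_singleton, setEnergy,
    integral_biUnion_finset L (fun l _ => hG l) hd fun l _ => hw.integrableOn,
    measureReal_biUnion_finset hd fun l _ => hG l]
  exact sq_sum_div_le_sum_sq_div_of_nonneg L _ _ (fun l _ => measureReal_nonneg)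
    fun l _ => setIntegral_eq_zero_of_measureReal_eq_zero

lemma setEnergy_add_sq_mul_le (hw : Integrable w μ) {R S : Set α} (hS : MeasurableSet S)
    (hSR : S ⊆ R) {ε : ℝ} (hε : 0 ≤ ε)
    (hdev : ε * μ.real R ≤ |μ.real S * ((∫ x in R, w x ∂μ) / μ.real R) - ∫ x in S, w x ∂μ|) :
    setEnergy μ w R + ε ^ 2 * μ.real R ≤ setEnergy μ w S + setEnergy μ w (R \ S) := by
  have hI := integral_inter_add_sdiff hS (hw.integrableOn (s := R))
  have hM := measureReal_inter_add_sdiff (μ := μ) (s := R) hS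
  rw [inter_eq_right.2 hSR] at hI hM
  rw [← hI, ← hM] at hdev
  simp only [setEnergy, ← hI, ← hM]
  exact add_sq_div_add_add_sq_mul_le measureReal_nonneg measureReal_nonneg
    setIntegral_eq_zero_of_measureReal_eq_zero setIntegral_eq_zero_of_measureReal_eq_zero hε hdev

lemma setEnergy_add_sq_mul_le_sum (hw : Integrable w μ) {G : α → ι}
    (hG : ∀ l, MeasurableSet (G ⁻¹' {l})) (L : Finset ι) {S : Set α} (hS : MeasurableSet S)
    (hSL : S ⊆ G ⁻¹' L) (hGS : ∀ l ∈ L, G ⁻¹' {l} ⊆ S ∨ Disjoint (G ⁻¹' {l}) S)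
    {ε : ℝ} (hε : 0 ≤ ε)
    (hdev : ε * μ.real (G ⁻¹' L) ≤
      |μ.real S * ((∫ x in G ⁻¹' L, w x ∂μ) / μ.real (G ⁻¹' L)) - ∫ x in S, w x ∂μ|) :
    setEnergy μ w (G ⁻¹' L) + ε ^ 2 * μ.real (G ⁻¹' L) ≤ ∑ l ∈ L, setEnergy μ w (G ⁻¹' {l}) := by
  classical
  set Lin := L.filter fun l => G ⁻¹' {l} ⊆ S
  have hSeq : S = G ⁻¹' Lin := by
    ext x
    refine ⟨fun hx => ?_, fun hx => ?_⟩
    · have hxL : G x ∈ L := hSL hx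
      refine Finset.mem_filter.2 ⟨hxL, ?_⟩
      exact (hGS _ hxL).resolve_right
        (Set.not_disjoint_iff.2 ⟨x, mem_preimage.2 (mem_singleton _), hx⟩)
    · exact (Finset.mem_filter.1 hx).2 (mem_preimage.2 (mem_singleton _))
  have hdiff : G ⁻¹' L \ S = G ⁻¹' ↑(L \ Lin) := by
    rw [hSeq, ← preimage_sdiff, Finset.coe_sdiff]
  calc setEnergy μ w (G ⁻¹' L) + ε ^ 2 * μ.real (G ⁻¹' L)
      ≤ setEnergy μ w S + setEnergy μ w (G ⁻¹' L \ S) :=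
        setEnergy_add_sq_mul_le hw hS hSL hε hdev
    _ ≤ ∑ l ∈ Lin, setEnergy μ w (G ⁻¹' {l}) + ∑ l ∈ L \ Lin, setEnergy μ w (G ⁻¹' {l}) := by
        rw [hdiff, hSeq]
        exact add_le_add (setEnergy_preimage_le_sum hw hG _) (setEnergy_preimage_le_sum hw hG _)
    _ = ∑ l ∈ L, setEnergy μ w (G ⁻¹' {l}) := by
        rw [add_comm, Finset.sum_sdiff (Finset.filter_subset _ _)]

lemma energy_add_sq_mul_le [Fintype κ] [Fintype ι] (hw : Integrable w μ) {F : α → κ}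
    {G : α → ι} (hG : ∀ l, MeasurableSet (G ⁻¹' {l})) (r : ι → κ) (hFG : ∀ x, F x = r (G x))
    (B : Finset κ) (S : κ → Set α) (hS : ∀ k ∈ B, MeasurableSet (S k))
    (hSF : ∀ k ∈ B, S k ⊆ F ⁻¹' {k})
    (hGS : ∀ l, r l ∈ B → G ⁻¹' {l} ⊆ S (r l) ∨ Disjoint (G ⁻¹' {l}) (S (r l)))
    {ε : ℝ} (hε : 0 ≤ ε)
    (hdev : ∀ k ∈ B, ε * μ.real (F ⁻¹' {k}) ≤
      |μ.real (S k) * ((∫ x in F ⁻¹' {k}, w x ∂μ) / μ.real (F ⁻¹' {k})) - ∫ x in S k, w x ∂μ|) :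
    energy μ w F + ε ^ 2 * ∑ k ∈ B, μ.real (F ⁻¹' {k}) ≤ energy μ w G := by
  classical
  have hfib : ∀ k, F ⁻¹' {k} = G ⁻¹' ↑(Finset.univ.filter fun l => r l = k) := by
    intro k; ext x; simp [hFG]
  have hcell : ∀ k, setEnergy μ w (F ⁻¹' {k}) + (if k ∈ B then ε ^ 2 * μ.real (F ⁻¹' {k}) else 0)
      ≤ ∑ l ∈ Finset.univ.filter (fun l => r l = k), setEnergy μ w (G ⁻¹' {l}) := by
    intro k
    rw [hfib k]
    split_ifs with hk
    · refine setEnergy_add_sq_mul_le_sum hw hG _ (hS k hk) ((hSF k hk).trans (hfib k).le)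
        (fun l hl => ?_) hε ((hfib k) ▸ hdev k hk)
      obtain rfl := (Finset.mem_filter.1 hl).2
      exact hGS l hk
    · rw [add_zero]
      exact setEnergy_preimage_le_sum hw hG _
  calc energy μ w F + ε ^ 2 * ∑ k ∈ B, μ.real (F ⁻¹' {k})
      = ∑ k, (setEnergy μ w (F ⁻¹' {k}) +
          if k ∈ B then ε ^ 2 * μ.real (F ⁻¹' {k}) else 0) := by
        rw [Finset.sum_add_distrib, Finset.sum_ite_mem, Finset.univ_inter, Finset.mul_sum, energy]
    _ ≤ ∑ k, ∑ l ∈ Finset.univ.filter (fun l => r l = k), setEnergy μ w (G ⁻¹' {l}) :=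
        Finset.sum_le_sum fun k _ => hcell k
    _ = energy μ w G := Finset.sum_fiberwise _ _ _

end Energy

section Refinement

variable {Ω κ : Type*} [MeasurableSpace Ω] [Fintype κ]

lemma exists_refinement_of_sets {M N : ℕ} {f : Ω → Fin M} (hf : Measurable f) (A : κ → Set Ω)
    (hA : ∀ k, MeasurableSet (A k)) (hN : Fintype.card κ = N) :
    ∃ g : Ω → Fin (M * 2 ^ N), Measurable g ∧ (∃ r : Fin (M * 2 ^ N) → Fin M, ∀ x, f x = r (g x)) ∧
      ∀ l k, g ⁻¹' {l} ⊆ A k ∨ Disjoint (g ⁻¹' {l}) (A k) := by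
  classical
  let e : Fin M × (κ → Bool) ≃ Fin (M * 2 ^ N) := Fintype.equivFinOfCardEq (by simp [hN])
  let g₀ : Ω → Fin M × (κ → Bool) := fun x => (f x, fun k => decide (x ∈ A k))
  have hg₀ : Measurable g₀ :=
    hf.prodMk (measurable_pi_lambda _ fun k => measurable_to_bool (by convert hA k; ext; simp))
  refine ⟨e ∘ g₀, (measurable_of_countable e).comp hg₀,
    ⟨fun l => (e.symm l).1, fun x => by simp [g₀]⟩, fun l k => ?_⟩
  by_cases h : ∃ x ∈ A k, e (g₀ x) = l
  · obtain ⟨x, hxA, rfl⟩ := h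
    left
    intro y hy
    have hk := congrFun (Prod.ext_iff.1 (e.injective hy)).2 k
    simpa [g₀, hxA] using hk
  · right
    exact Set.disjoint_left.2 fun y hy hyA => h ⟨y, hyA, hy⟩

end Refinement

section InitialPartition

variable {Ω : Type*} [MeasurableSpace Ω] {π : Measure Ω}

def IsPointOrSmall (π : Measure Ω) (ε : ℝ) (s : Set Ω) : Prop :=
  s.Subsingleton ∨ (π s).toReal ≤ ε

lemma IsPointOrSmall.mono [IsFiniteMeasure π] {ε : ℝ} {s t : Set Ω} (hs : IsPointOrSmall π ε s)
    (hts : t ⊆ s) : IsPointOrSmall π ε t :=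
  hs.imp (·.anti hts) (measureReal_mono hts).trans

lemma measure_le_of_ordConnected {α : Type*} [ConditionallyCompleteLinearOrder α]
    [TopologicalSpace α] [OrderTopology α] [MeasurableSpace α] [OpensMeasurableSpace α]
    (μ : Measure α) [μ.InnerRegular] {I : Set α} (hI : I.OrdConnected) {c : ENNReal}
    (h : ∀ s ∈ I, ∀ t ∈ I, μ (Icc s t) ≤ c) : μ I ≤ c := by
  rw [hI.measurableSet.measure_eq_iSup_isCompact μ]
  refine iSup₂_le fun K hKI => iSup_le fun hK => ?_
  rcases K.eq_empty_or_nonempty with rfl | hne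
  · simp
  exact (measure_mono (subset_Icc_csInf_csSup hK.bddBelow hK.bddAbove)).trans
    (h _ (hKI (hK.sInf_mem hne)) _ (hKI (hK.sSup_mem hne)))

lemma measureReal_Icc_le_of_floor_eq (ν : Measure ℝ) [IsFiniteMeasure ν] {n a b : ℕ} (hn : 0 < n)
    (hba : b ≤ a) {s t : ℝ} (hs : ⌊(n : ℝ) * ν.real (Iio s)⌋₊ = a)
    (ht : ⌊(n : ℝ) * ν.real (Iic t)⌋₊ = b) : ν.real (Icc s t) ≤ 1 / n := by
  rcases lt_or_ge t s with hts | hst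
  · simp [Icc_eq_empty_of_lt hts]
  have hIcc : ν.real (Icc s t) = ν.real (Iic t) - ν.real (Iio s) := by
    rw [← Iio_union_Icc_eq_Iic hst,
      measureReal_union ((Iio_disjoint_Ici le_rfl).mono_right Icc_subset_Ici_self)
        measurableSet_Icc]
    ring
  have hs' : (a : ℝ) ≤ n * ν.real (Iio s) := hs ▸ Nat.floor_le (by positivity)
  have ht' : (n : ℝ) * ν.real (Iic t) < b + 1 := ht ▸ Nat.lt_floor_add_one _
  have hba' : (b : ℝ) ≤ a := by exact_mod_cast hba
  rw [hIcc, le_div_iff₀ (by exact_mod_cast hn)]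
  linarith

/-- The parts are the fibres of `t ↦ (⌊n ν(-∞,t)⌋, ⌊n ν(-∞,t]⌋)`: a part on which the two
coordinates differ holds a single point (an atom jumping over a multiple of `1/n`); on the other
parts the distribution function increases by less than `1/n`. -/
lemma exists_partition_real_isPointOrSmall (ν : Measure ℝ) [IsProbabilityMeasure ν] {n : ℕ}
    (hn : 0 < n) :
    ∃ f : ℝ → Fin (n + 1) × Fin (n + 1), Measurable f ∧
      ∀ v, IsPointOrSmall ν (1 / n) (f ⁻¹' {v}) := by
  have hfloor : ∀ s : Set ℝ, ⌊(n : ℝ) * ν.real s⌋₊ < n + 1 := fun s =>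
    Nat.lt_succ_of_le (Nat.floor_le_of_le (mul_le_of_le_one_right n.cast_nonneg measureReal_le_one))
  let f : ℝ → Fin (n + 1) × Fin (n + 1) := fun t =>
    (⟨_, hfloor (Iio t)⟩, ⟨_, hfloor (Iic t)⟩)
  have hmono : Monotone f := fun s t hst =>
    ⟨Nat.floor_mono (mul_le_mul_of_nonneg_left (measureReal_mono (Iio_subset_Iio hst))
      n.cast_nonneg),
     Nat.floor_mono (mul_le_mul_of_nonneg_left (measureReal_mono (Iic_subset_Iic.2 hst))
      n.cast_nonneg)⟩
  have hconn : ∀ v, (f ⁻¹' {v}).OrdConnected := fun v =>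
    ⟨fun x hx y hy z hz => le_antisymm (hy ▸ hmono hz.2) (hx ▸ hmono hz.1)⟩
  refine ⟨f, measurable_to_countable' fun v => (hconn v).measurableSet, fun ⟨a, b⟩ => ?_⟩
  by_cases hab : (a : ℕ) < b
  · left
    have hjump : ∀ s ∈ f ⁻¹' {(a, b)}, ∀ t ∈ f ⁻¹' {(a, b)}, ¬ s < t := by
      intro s hs t ht hst
      have h := Nat.floor_mono (mul_le_mul_of_nonneg_left
        (measureReal_mono (μ := ν) (Iic_subset_Iio.2 hst)) n.cast_nonneg)
      rw [show ⌊(n : ℝ) * ν.real (Iic s)⌋₊ = b from congrArg (fun p => (p.2 : ℕ)) hs,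
        show ⌊(n : ℝ) * ν.real (Iio t)⌋₊ = a from congrArg (fun p => (p.1 : ℕ)) ht] at h
      omega
    exact fun s hs t ht => le_antisymm (not_lt.1 (hjump t ht s hs)) (not_lt.1 (hjump s hs t ht))
  · right
    refine ENNReal.toReal_le_of_le_ofReal (by positivity)
      (measure_le_of_ordConnected ν (hconn _) fun s hs t ht => ?_)
    rw [← ofReal_measureReal (measure_ne_top ν _)]
    exact ENNReal.ofReal_le_ofReal (measureReal_Icc_le_of_floor_eq ν hn (not_lt.1 hab)
      (congrArg (fun p => (p.1 : ℕ)) hs) (congrArg (fun p => (p.2 : ℕ)) ht))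

lemma exists_partition_isPointOrSmall [StandardBorelSpace Ω] (π : Measure Ω)
    [IsProbabilityMeasure π] {n : ℕ} (hn : 0 < n) :
    ∃ f : Ω → Fin ((n + 1) * (n + 1)), Measurable f ∧
      ∀ i, IsPointOrSmall π (1 / n) (f ⁻¹' {i}) := by
  obtain ⟨e, he⟩ := exists_measurableEmbedding_real Ω
  have : IsProbabilityMeasure (π.map e) :=
    Measure.isProbabilityMeasure_map he.measurable.aemeasurable
  obtain ⟨f, hf, hfine⟩ := exists_partition_real_isPointOrSmall (π.map e) hn
  refine ⟨finProdFinEquiv ∘ f ∘ e, (measurable_of_countable _).comp (hf.comp he.measurable),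
    fun i => ?_⟩
  have hfib : (finProdFinEquiv ∘ f ∘ e) ⁻¹' {i} = e ⁻¹' (f ⁻¹' {finProdFinEquiv.symm i}) := by
    ext x; exact finProdFinEquiv.eq_symm_apply.symm
  rw [hfib, IsPointOrSmall, ← he.map_apply]
  exact (hfine _).imp_left (·.preimage he.injective)

end InitialPartition

section Graphon

variable {Ω : Type*} [MeasurableSpace Ω] {π : Measure Ω} {W : Ω → Ω → ℝ}

lemma IsGraphon.norm_le_one (hW : IsGraphon W) (z : Ω × Ω) : ‖W z.1 z.2‖ ≤ 1 := by
  obtain ⟨h0, h1⟩ := hW.2.2 z.1 z.2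
  rwa [Real.norm_of_nonneg h0]

lemma IsGraphon.integrable [IsFiniteMeasure π] (hW : IsGraphon W) :
    Integrable (fun z : Ω × Ω => W z.1 z.2) (π.prod π) :=
  (integrable_const (1 : ℝ)).mono' hW.1.aestronglyMeasurable
    (Filter.Eventually.of_forall hW.norm_le_one)

lemma isElegant_of_subsingleton [MeasurableSingletonClass Ω] [IsFiniteMeasure π] {C : Set Ω}
    (hC : C.Subsingleton) : IsElegant π W C := by
  rcases hC.eq_empty_or_singleton with rfl | ⟨x, rfl⟩
  · simp [IsElegant]
  refine ae_restrict_of_forall_mem (measurableSet_singleton x) fun y hy => ?_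
  rw [mem_singleton_iff] at hy
  subst hy
  rw [wdeg, pairDensity, singleton_prod_singleton, Measure.restrict_singleton,
    Measure.restrict_singleton, integral_smul_measure, integral_smul_measure, integral_dirac,
    integral_dirac, ← singleton_prod_singleton, Measure.prod_prod, smul_eq_mul, smul_eq_mul,
    ENNReal.toReal_mul]
  rcases eq_or_ne (π {y}).toReal 0 with h | h
  · simp [h]
  · field_simp

open scoped Classical in
lemma sum_sq_measure_not_isElegant_le [MeasurableSingletonClass Ω] [IsProbabilityMeasure π]
    {ε : ℝ} (hε : 0 ≤ ε) {M : ℕ} {f : Ω → Fin M} (hf : Measurable f)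
    (hfine : ∀ i, IsPointOrSmall π ε (f ⁻¹' {i})) :
    ∑ i ∈ Finset.univ.filter (fun i => ¬ IsElegant π W (f ⁻¹' {i})), (π (f ⁻¹' {i})).toReal ^ 2
      ≤ ε := by
  have hsmall : ∀ i ∈ Finset.univ.filter (fun i => ¬ IsElegant π W (f ⁻¹' {i})),
      (π (f ⁻¹' {i})).toReal ≤ ε := fun i hi =>
    (hfine i).resolve_left fun h => (Finset.mem_filter.1 hi).2 (isElegant_of_subsingleton h)
  have htotal : ∑ i, (π (f ⁻¹' {i})).toReal = 1 := by
    simp_rw [← measureReal_def]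
    rw [sum_measureReal_preimage_singleton _ fun i _ => hf (measurableSet_singleton i),
      Finset.coe_univ, preimage_univ, probReal_univ]
  calc ∑ i ∈ Finset.univ.filter (fun i => ¬ IsElegant π W (f ⁻¹' {i})), (π (f ⁻¹' {i})).toReal ^ 2
      ≤ ∑ i ∈ Finset.univ.filter (fun i => ¬ IsElegant π W (f ⁻¹' {i})),
          ε * (π (f ⁻¹' {i})).toReal :=
        Finset.sum_le_sum fun i hi => by
          rw [sq]; exact mul_le_mul_of_nonneg_right (hsmall i hi) ENNReal.toReal_nonneg
    _ ≤ ∑ i, ε * (π (f ⁻¹' {i})).toReal :=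
        Finset.sum_le_sum_of_subset_of_nonneg (Finset.filter_subset _ _) fun i _ _ =>
          mul_nonneg hε ENNReal.toReal_nonneg
    _ = ε := by rw [← Finset.mul_sum, htotal, mul_one]

lemma energy_prodMap_le_one [IsProbabilityMeasure π] (hW : IsGraphon W) {M : ℕ}
    {g : Ω → Fin M} (hg : Measurable g) :
    energy (π.prod π) (fun z => W z.1 z.2) (Prod.map g g) ≤ 1 :=
  (energy_le_measureReal_univ hW.norm_le_one
    fun l => (hg.prodMap hg) (measurableSet_singleton l)).trans measureReal_le_one

open scoped Classical in
noncomputable def irregularWeight (π : Measure Ω) (W : Ω → Ω → ℝ) (δ : ℝ) {M : ℕ}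
    (P : Fin M → Set Ω) : ℝ :=
  ∑ p ∈ Finset.univ.filter (fun p : Fin M × Fin M =>
      p.1 ≠ p.2 ∧ ¬ IsRegularPair π W δ (P p.1) (P p.2)),
    (π (P p.1)).toReal * (π (P p.2)).toReal

-- each of the `M` parts is cut by the `2M²` sets witnessing irregularity of the `M²` pairs
def refinementBound (M : ℕ) : ℕ := M * 2 ^ (M * M * 2)

lemma exists_witness_not_isRegularPair (δ : ℝ) (C D : Set Ω) :
    ∃ C' D' : Set Ω, MeasurableSet C' ∧ MeasurableSet D' ∧ C' ⊆ C ∧ D' ⊆ D ∧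
      (¬ IsRegularPair π W δ C D → δ * ((π C).toReal * (π D).toReal) ≤
        |(π C').toReal * (π D').toReal * pairDensity π W C D
          - ∫ z in C' ×ˢ D', W z.1 z.2 ∂(π.prod π)|) := by
  by_cases h : IsRegularPair π W δ C D
  · exact ⟨∅, ∅, .empty, .empty, empty_subset _, empty_subset _, absurd h⟩
  simp only [IsRegularPair, not_forall, not_le] at h
  obtain ⟨C', D', hC', hD', hC'C, hD'D, hdev⟩ := h
  exact ⟨C', D', hC', hD', hC'C, hD'D, fun _ => mul_assoc δ _ _ ▸ hdev.le⟩

lemma exists_refinement_energy_add_le [IsFiniteMeasure π] (hW : IsGraphon W) {δ : ℝ}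
    (hδ : 0 ≤ δ) {M : ℕ} {f : Ω → Fin M} (hf : Measurable f) :
    ∃ g : Ω → Fin (refinementBound M), Measurable g ∧
      (∃ r : Fin (refinementBound M) → Fin M, ∀ x, f x = r (g x)) ∧
      energy (π.prod π) (fun z => W z.1 z.2) (Prod.map f f)
          + δ ^ 2 * irregularWeight π W δ (fun i => f ⁻¹' {i})
        ≤ energy (π.prod π) (fun z => W z.1 z.2) (Prod.map g g) := by
  classical
  choose C D hC hD hCf hDf hdev using fun p : Fin M × Fin M =>
    exists_witness_not_isRegularPair (π := π) (W := W) δ (f ⁻¹' {p.1}) (f ⁻¹' {p.2})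
  obtain ⟨g, hg, ⟨r, hfg⟩, hgCD⟩ := exists_refinement_of_sets (N := M * M * 2) hf
    (fun q : (Fin M × Fin M) × Bool => bif q.2 then C q.1 else D q.1)
    (fun q => by cases q.2; exacts [hD _, hC _]) (by simp)
  refine ⟨g, hg, ⟨r, hfg⟩, ?_⟩
  set B := Finset.univ.filter fun p : Fin M × Fin M =>
    p.1 ≠ p.2 ∧ ¬ IsRegularPair π W δ (f ⁻¹' {p.1}) (f ⁻¹' {p.2})
  have hweight : ∑ p ∈ B, (π.prod π).real (Prod.map f f ⁻¹' {p})
      = irregularWeight π W δ (fun i => f ⁻¹' {i}) :=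
    Finset.sum_congr rfl fun p _ => by rw [preimage_prodMap_singleton, measureReal_prod_prod]; rfl
  rw [← hweight]
  refine energy_add_sq_mul_le hW.integrable (fun l => (hg.prodMap hg) (measurableSet_singleton l))
    (Prod.map r r) (fun x => Prod.ext (hfg x.1) (hfg x.2)) B (fun p => C p ×ˢ D p)
    (fun p _ => (hC p).prod (hD p))
    (fun p _ => by rw [preimage_prodMap_singleton]; exact prod_mono (hCf p) (hDf p))
    (fun l _ => ?_) hδ (fun p hp => ?_)
  · rw [preimage_prodMap_singleton]
    rcases hgCD l.1 (Prod.map r r l, true) with h₁ | h₁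
    · rcases hgCD l.2 (Prod.map r r l, false) with h₂ | h₂
      · exact Or.inl (prod_mono h₁ h₂)
      · exact Or.inr (disjoint_prod.2 (Or.inr h₂))
    · exact Or.inr (disjoint_prod.2 (Or.inl h₁))
  · rw [preimage_prodMap_singleton, measureReal_prod_prod, measureReal_prod_prod]
    exact hdev p (Finset.mem_filter.1 hp).2.2

end Graphon

section Iteration

variable {Ω : Type*} [MeasurableSpace Ω] {π : Measure Ω} {W : Ω → Ω → ℝ}

lemma le_refinementBound (M : ℕ) : M ≤ refinementBound M :=
  Nat.le_mul_of_pos_right M (Nat.two_pow_pos _)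

lemma exists_partition_irregularWeight_le [IsProbabilityMeasure π] (hW : IsGraphon W)
    {δ ε : ℝ} (hδ : 0 < δ) (n : ℕ) {M : ℕ} {f : Ω → Fin M} (hf : Measurable f)
    (hfine : ∀ i, IsPointOrSmall π ε (f ⁻¹' {i}))
    (hen : 1 ≤ energy (π.prod π) (fun z => W z.1 z.2) (Prod.map f f) + n * (δ ^ 3 / 2)) :
    ∃ (M' : ℕ) (f' : Ω → Fin M'), M' ≤ refinementBound^[n] M ∧ Measurable f' ∧
      (∀ i, IsPointOrSmall π ε (f' ⁻¹' {i})) ∧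
      irregularWeight π W δ (fun i => f' ⁻¹' {i}) ≤ δ / 2 := by
  induction n generalizing M f with
  | zero =>
    refine ⟨M, f, le_rfl, hf, hfine, ?_⟩
    by_contra! hbig
    obtain ⟨g, hg, -, hgain⟩ := exists_refinement_energy_add_le (π := π) hW hδ.le hf
    have := energy_prodMap_le_one (π := π) hW hg
    simp only [CharP.cast_eq_zero, zero_mul, add_zero] at hen
    nlinarith [pow_pos hδ 2]
  | succ n ih =>
    by_cases hsmall : irregularWeight π W δ (fun i => f ⁻¹' {i}) ≤ δ / 2
    · exact ⟨M, f, Function.id_le_iterate_of_id_le le_refinementBound _ M, hf, hfine, hsmall⟩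
    obtain ⟨g, hg, ⟨r, hfg⟩, hgain⟩ := exists_refinement_energy_add_le (π := π) hW hδ.le hf
    have hfine' : ∀ l, IsPointOrSmall π ε (g ⁻¹' {l}) := fun l =>
      (hfine (r l)).mono fun x hx => (hfg x).trans (congrArg r hx)
    obtain ⟨M', f', hM', hrest⟩ := ih hg hfine' (by push_cast at hen; nlinarith [pow_pos hδ 2])
    exact ⟨M', f', (Function.iterate_succ_apply _ n M).symm ▸ hM', hrest⟩

end Iteration

universe u

open scoped Classical in
/-- **Theorem (regularity lemma for graphons on spaces with atoms, with elegance).**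
For each `δ > 0` there is `Mreg ∈ ℕ` such that every graphon `W` on a standard
probability space `(Ω,π)` has a `δ`-regular partition into at most `Mreg` parts:
the sum of `π(P i)²` over inelegant parts plus the sum of `π(P i)π(P j)` over
ordered pairs `i ≠ j` which are not `δ`-regular is at most `δ`. -/
theorem regularity_lemma (δ : ℝ) (hδ : 0 < δ) :
    ∃ Mreg : ℕ, ∀ (Ω : Type u) [MeasurableSpace Ω] [StandardBorelSpace Ω]
      (π : Measure Ω) [IsProbabilityMeasure π] (W : Ω → Ω → ℝ), IsGraphon W →
      ∃ (M : ℕ) (P : Fin M → Set Ω), M ≤ Mreg ∧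
        (∀ i, MeasurableSet (P i)) ∧
        (Pairwise fun i j => Disjoint (P i) (P j)) ∧
        (⋃ i, P i) = Set.univ ∧
        (∑ i ∈ Finset.univ.filter (fun i : Fin M => ¬ IsElegant π W (P i)),
            ((π (P i)).toReal) ^ 2)
          + (∑ p ∈ Finset.univ.filter (fun p : Fin M × Fin M =>
                p.1 ≠ p.2 ∧ ¬ IsRegularPair π W δ (P p.1) (P p.2)),
              (π (P p.1)).toReal * (π (P p.2)).toReal) ≤ δ := by
  set n := ⌈2 / δ⌉₊
  set N := ⌈2 / δ ^ 3⌉₊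
  have hn : 0 < n := Nat.ceil_pos.2 (by positivity)
  have hnδ : 1 / (n : ℝ) ≤ δ / 2 := by
    rw [div_le_iff₀ (by positivity), ← div_le_iff₀' (by positivity), one_div_div]
    exact Nat.le_ceil _
  have hNδ : 1 ≤ (N : ℝ) * (δ ^ 3 / 2) := by
    rw [← div_le_iff₀ (by positivity), one_div_div]
    exact Nat.le_ceil _
  refine ⟨refinementBound^[N] ((n + 1) * (n + 1)), fun Ω _ _ π _ W hW => ?_⟩
  obtain ⟨f₀, hf₀, hfine₀⟩ := exists_partition_isPointOrSmall π hn
  obtain ⟨M, f, hM, hf, hfine, hirr⟩ := exists_partition_irregularWeight_le hW hδ N hf₀ hfine₀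
    (by linarith [energy_nonneg (μ := π.prod π) (w := fun z => W z.1 z.2) (Prod.map f₀ f₀)])
  refine ⟨M, fun i => f ⁻¹' {i}, hM, fun i => hf (measurableSet_singleton i),
    pairwise_disjoint_fiber f, eq_univ_of_forall fun x => mem_iUnion.2 ⟨f x, rfl⟩, ?_⟩
  calc _ ≤ 1 / (n : ℝ) + δ / 2 :=
        add_le_add (sum_sq_measure_not_isElegant_le (by positivity) hf hfine) hirr
    _ ≤ δ := by linarith
end

section
/- Let n, m ∈ ℕ with m ≥ 1. Let (a_h)_{h∈[n]} be nonnegative integers with a_h ≤ m for every h, set A = Σ_{h∈[n]} a_h, and let (b_ℓ)_{ℓ∈[m]} be nonnegative integers such that every b_ℓ equals ⌊A/m⌋ or ⌈A/m⌉ and Σ_{ℓ∈[m]} b_ℓ = A. Then the pair of sequences ((a_h)_{h∈[n]}, (b_ℓ)_{ℓ∈[m]}) is bigraphic; that is, there exists a bipartite graph with parts X and Y of sizes n and m whose degree sequence on X is (a_h)_{h∈[n]} and whose degree sequence on Y is (b_ℓ)_{ℓ∈[m]}. -/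
open MeasureTheory

private lemma myFloorCeil (m q r : ℕ) (hm : 1 ≤ m) (hr : r < m) :
    (m * q + r) / m = q ∧ (m * q + r + m - 1) / m = (if r = 0 then q else q + 1) := by
  constructor
  · rw [Nat.mul_add_div hm, Nat.div_eq_of_lt hr, add_zero]
  · split
    · next h =>
      have he : m * q + r + m - 1 = m * q + (m - 1) := by omega
      rw [he, Nat.mul_add_div hm, Nat.div_eq_of_lt (by omega), add_zero]
    · next h =>
      have he : m * q + r + m - 1 = m * (q + 1) + (r - 1) := by
        have : m * (q + 1) = m * q + m := by ring
        omega
      rw [he, Nat.mul_add_div hm, Nat.div_eq_of_lt (by omega), add_zero]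

private lemma myExistsS (m : ℕ) (hm : 1 ≤ m) (A d : ℕ) (hd : d ≤ m) (hdA : d ≤ A)
    (b : Fin m → ℕ)
    (hb : ∀ ℓ, b ℓ = A / m ∨ b ℓ = (A + m - 1) / m) (hsum : ∑ ℓ, b ℓ = A) :
    ∃ S : Finset (Fin m), S.card = d ∧ (∀ ℓ ∈ S, 1 ≤ b ℓ) ∧
      (∀ ℓ, b ℓ - (if ℓ ∈ S then 1 else 0) = (A - d) / m ∨
            b ℓ - (if ℓ ∈ S then 1 else 0) = (A - d + m - 1) / m) ∧
      (∑ ℓ, (b ℓ - if ℓ ∈ S then 1 else 0)) = A - d := by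
  classical
  obtain ⟨q, r, hrm, hA⟩ : ∃ q r, r < m ∧ m * q + r = A :=
    ⟨A / m, A % m, Nat.mod_lt _ hm, Nat.div_add_mod A m⟩
  have hfloor : A / m = q := by
    have := (myFloorCeil m q r hm hrm).1; rwa [hA] at this
  have hceil : (A + m - 1) / m = if r = 0 then q else q + 1 := by
    have := (myFloorCeil m q r hm hrm).2
    rwa [show m * q + r + m - 1 = A + m - 1 by omega] at this
  have hb' : ∀ ℓ, b ℓ = q ∨ (b ℓ = q + 1 ∧ r ≠ 0) := by
    intro ℓ
    rcases hb ℓ with h | h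
    · rw [hfloor] at h; exact Or.inl h
    · rw [hceil] at h
      by_cases hr : r = 0
      · simp [hr] at h; exact Or.inl h
      · simp [hr] at h; exact Or.inr ⟨h, hr⟩
  set T := Finset.univ.filter (fun ℓ => q + 1 ≤ b ℓ) with hTdef
  have hmemT : ∀ ℓ, ℓ ∈ T ↔ b ℓ = q + 1 := by
    intro ℓ
    simp only [hTdef, Finset.mem_filter, Finset.mem_univ, true_and]
    rcases hb' ℓ with h | ⟨h, _⟩ <;> omega
  have hTcard : T.card = r := by
    have h1 : ∑ ℓ, b ℓ = ∑ ℓ, (q + if ℓ ∈ T then 1 else 0) := by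
      refine Finset.sum_congr rfl fun ℓ _ => ?_
      by_cases hT : ℓ ∈ T
      · rw [(hmemT ℓ).mp hT]; simp [hT]
      · have h2 := hb' ℓ
        have h3 : b ℓ ≠ q + 1 := fun h => hT ((hmemT ℓ).mpr h)
        simp [hT]; omega
    rw [Finset.sum_add_distrib, Finset.sum_const, Finset.sum_ite_mem,
      Finset.univ_inter, Finset.sum_const] at h1
    simp only [Finset.card_univ, Fintype.card_fin, smul_eq_mul, mul_one] at h1
    omega
  by_cases hcase : d ≤ r
  · -- pick S ⊆ T
    obtain ⟨S, hST, hScard⟩ := Finset.exists_subset_card_eq (show d ≤ T.card by omega)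
    have hfloor' : (A - d) / m = q := by
      have := (myFloorCeil m q (r - d) hm (by omega)).1
      rwa [show m * q + (r - d) = A - d by omega] at this
    have hceil' : (A - d + m - 1) / m = if r - d = 0 then q else q + 1 := by
      have := (myFloorCeil m q (r - d) hm (by omega)).2
      rwa [show m * q + (r - d) + m - 1 = A - d + m - 1 by omega] at this
    have hpos : ∀ ℓ ∈ S, 1 ≤ b ℓ := fun ℓ hℓ => by
      have := (hmemT ℓ).mp (hST hℓ); omega
    refine ⟨S, hScard, hpos, ?_, ?_⟩
    · intro ℓ
      by_cases hS : ℓ ∈ S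
      · have hbl := (hmemT ℓ).mp (hST hS)
        left; rw [hfloor', if_pos hS, hbl]; omega
      · rw [if_neg hS, Nat.sub_zero]
        rcases hb' ℓ with h | ⟨h, _⟩
        · left; rw [h, hfloor']
        · right
          have hrd : r - d ≠ 0 := by
            intro h0
            have hSeqT : S = T := Finset.eq_of_subset_of_card_le hST (by omega)
            rw [hSeqT] at hS
            exact hS ((hmemT ℓ).mpr h)
          rw [hceil', if_neg hrd, h]
    · have h1 : ∑ ℓ, (b ℓ - if ℓ ∈ S then 1 else 0) + ∑ ℓ, (if ℓ ∈ S then 1 else 0)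
          = ∑ ℓ, b ℓ := by
        rw [← Finset.sum_add_distrib]
        refine Finset.sum_congr rfl fun ℓ _ => ?_
        by_cases hS : ℓ ∈ S
        · have := hpos ℓ hS; simp [hS]; omega
        · simp [hS]
      rw [Finset.sum_ite_mem, Finset.univ_inter, Finset.sum_const] at h1
      simp only [smul_eq_mul, mul_one, hScard] at h1
      omega
  · -- pick T ⊆ S
    obtain ⟨S, hTS, -, hScard⟩ :=
      Finset.exists_subsuperset_card_eq (t := (Finset.univ : Finset (Fin m))) (n := d)
        T.subset_univ (by omega) (by simp [hd])
    have hq1 : 1 ≤ q := by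
      rcases Nat.eq_zero_or_pos q with h0 | h
      · rw [h0, Nat.mul_zero] at hA; omega
      · exact h
    obtain ⟨q', rfl⟩ : ∃ q', q = q' + 1 := ⟨q - 1, by omega⟩
    have hmq : m * (q' + 1) = m * q' + m := by ring
    have hfloor' : (A - d) / m = q' := by
      have := (myFloorCeil m q' (m + r - d) hm (by omega)).1
      rwa [show m * q' + (m + r - d) = A - d by omega] at this
    have hceil' : (A - d + m - 1) / m = if m + r - d = 0 then q' else q' + 1 := by
      have h2 := (myFloorCeil m q' (m + r - d) hm (by omega)).2
      rwa [show m * q' + (m + r - d) + m - 1 = A - d + m - 1 by omega] at h2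
    have hpos : ∀ ℓ ∈ S, 1 ≤ b ℓ := fun ℓ _ => by
      rcases hb' ℓ with h | ⟨h, _⟩ <;> omega
    refine ⟨S, hScard, hpos, ?_, ?_⟩
    · intro ℓ
      by_cases hS : ℓ ∈ S
      · by_cases hT : ℓ ∈ T
        · have hbl := (hmemT ℓ).mp hT
          have hr0 : r ≠ 0 := by
            rcases hb' ℓ with h | ⟨_, h⟩ <;> omega
          right
          rw [hceil', if_neg (show ¬ (m + r - d = 0) by omega), if_pos hS, hbl]; omega
        · have hbl : b ℓ = q' + 1 := by
            have h3 : b ℓ ≠ q' + 1 + 1 := fun h => hT ((hmemT ℓ).mpr h)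
            rcases hb' ℓ with h | ⟨h, _⟩ <;> omega
          left; rw [hfloor', if_pos hS, hbl]; omega
      · have hbl : b ℓ = q' + 1 := by
          have hT : ℓ ∉ T := fun h => hS (hTS h)
          have h3 : b ℓ ≠ q' + 1 + 1 := fun h => hT ((hmemT ℓ).mpr h)
          rcases hb' ℓ with h | ⟨h, _⟩ <;> omega
        have hmd : m + r - d ≠ 0 := by
          intro h0
          have hSuniv : S = Finset.univ :=
            Finset.card_eq_iff_eq_univ S |>.mp (by rw [hScard]; simp; omega)
          rw [hSuniv] at hS; exact hS (Finset.mem_univ ℓ)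
        right
        rw [hceil', if_neg hmd, if_neg hS, hbl]; omega
    · have h1 : ∑ ℓ, (b ℓ - if ℓ ∈ S then 1 else 0) + ∑ ℓ, (if ℓ ∈ S then 1 else 0)
          = ∑ ℓ, b ℓ := by
        rw [← Finset.sum_add_distrib]
        refine Finset.sum_congr rfl fun ℓ _ => ?_
        by_cases hS : ℓ ∈ S
        · have := hpos ℓ hS; simp [hS]; omega
        · simp [hS]
      rw [Finset.sum_ite_mem, Finset.univ_inter, Finset.sum_const] at h1
      simp only [smul_eq_mul, mul_one, hScard] at h1
      omega

/-- **Corollary of the Gale–Ryser theorem.** Let `m ≥ 1`, `(a h)` naturals with `a h ≤ m`,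
`A = Σ a h`, and `(b ℓ)` naturals each equal to `⌊A/m⌋` or `⌈A/m⌉` with `Σ b ℓ = A`. Then
`((a h), (b ℓ))` is bigraphic: there is a bipartite graph (a set of pairs) whose degrees on
the two sides are exactly `a` and `b`. -/
theorem balanced_pair_bigraphic (n m : ℕ) (hm : 1 ≤ m)
    (a : Fin n → ℕ) (ha : ∀ h, a h ≤ m)
    (b : Fin m → ℕ)
    (hb : ∀ ℓ, b ℓ = (∑ h, a h) / m ∨ b ℓ = ((∑ h, a h) + m - 1) / m)
    (hsum : ∑ ℓ, b ℓ = ∑ h, a h) :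
    ∃ E : Finset (Fin n × Fin m),
      (∀ h, (E.filter fun e => e.1 = h).card = a h) ∧
      (∀ ℓ, (E.filter fun e => e.2 = ℓ).card = b ℓ) := by
  classical
  induction n generalizing b with
  | zero =>
    have hb0 : ∀ ℓ, b ℓ = 0 := by
      intro ℓ
      rcases hb ℓ with h | h <;> simp only [Finset.univ_eq_empty, Finset.sum_empty] at h
      · simpa using h
      · rw [h, Nat.zero_add, Nat.div_eq_of_lt (by omega)]
    exact ⟨∅, fun h => h.elim0, fun ℓ => by simp [hb0 ℓ]⟩
  | succ n ih =>
    set d := a (Fin.last n) with hddef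
    have hsplit : ∑ h : Fin (n + 1), a h = (∑ h : Fin n, a h.castSucc) + d :=
      Fin.sum_univ_castSucc a
    have hd_le : d ≤ ∑ h : Fin (n + 1), a h :=
      Finset.single_le_sum (fun i _ => Nat.zero_le _) (Finset.mem_univ _)
    obtain ⟨S, hScard, hSpos, hb', hsum'⟩ :=
      myExistsS m hm (∑ h, a h) d (ha _) hd_le b hb hsum
    have hA' : (∑ h : Fin (n + 1), a h) - d = ∑ h : Fin n, a h.castSucc := by omega
    obtain ⟨E', hE1, hE2⟩ :=
      ih (fun h => a h.castSucc) (fun h => ha _)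
        (fun ℓ => b ℓ - if ℓ ∈ S then 1 else 0)
        (by intro ℓ; rw [← hA']; exact hb' ℓ)
        (by rw [← hA']; exact hsum')
    have hinj1 : Function.Injective
        (Prod.map (Fin.castSucc : Fin n → Fin (n + 1)) (id : Fin m → Fin m)) :=
      (Fin.castSucc_injective n).prodMap Function.injective_id
    have hinj2 : Function.Injective (fun ℓ : Fin m => (Fin.last n, ℓ)) :=
      fun x y h => congrArg Prod.snd h
    refine ⟨E'.image (Prod.map Fin.castSucc id) ∪ S.image (fun ℓ => (Fin.last n, ℓ)),
      ?_, ?_⟩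
    · intro h
      rw [Finset.filter_union]
      induction h using Fin.lastCases with
      | last =>
        have e1 : (E'.image (Prod.map Fin.castSucc id)).filter
            (fun e => e.1 = Fin.last n) = ∅ := by
          rw [Finset.filter_image, Finset.image_eq_empty, Finset.filter_eq_empty_iff]
          exact fun e _ => (Fin.castSucc_lt_last e.1).ne
        have e2 : (S.image (fun ℓ => (Fin.last n, ℓ))).filter
            (fun e => e.1 = Fin.last n) = S.image (fun ℓ => (Fin.last n, ℓ)) := by
          rw [Finset.filter_image]
          congr 1
          exact Finset.filter_true_of_mem (fun _ _ => rfl)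
        rw [e1, e2, Finset.empty_union, Finset.card_image_of_injective _ hinj2, hScard]
      | cast h₀ =>
        have e2 : (S.image (fun ℓ => (Fin.last n, ℓ))).filter
            (fun e => e.1 = Fin.castSucc h₀) = ∅ := by
          rw [Finset.filter_image, Finset.image_eq_empty, Finset.filter_eq_empty_iff]
          exact fun ℓ _ hc => (Fin.castSucc_lt_last h₀).ne' hc
        have e1 : (E'.image (Prod.map Fin.castSucc id)).filter
            (fun e => e.1 = Fin.castSucc h₀)
            = (E'.filter fun e => e.1 = h₀).image (Prod.map Fin.castSucc id) := by
          rw [Finset.filter_image]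
          congr 1
          apply Finset.filter_congr
          intro e _
          simp [Fin.castSucc_inj]
        rw [e1, e2, Finset.union_empty, Finset.card_image_of_injective _ hinj1, hE1]
    · intro ℓ
      rw [Finset.filter_union]
      have e1 : (E'.image (Prod.map Fin.castSucc id)).filter (fun e => e.2 = ℓ)
          = (E'.filter fun e => e.2 = ℓ).image (Prod.map Fin.castSucc id) := by
        rw [Finset.filter_image]
        rfl
      have e2 : (S.image (fun ℓ' => (Fin.last n, ℓ'))).filter (fun e => e.2 = ℓ)
          = (S.filter fun ℓ' => ℓ' = ℓ).image (fun ℓ' => (Fin.last n, ℓ')) := by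
        rw [Finset.filter_image]
      have hdisj : Disjoint
          ((E'.filter fun e => e.2 = ℓ).image (Prod.map Fin.castSucc id))
          ((S.filter fun ℓ' => ℓ' = ℓ).image (fun ℓ' => (Fin.last n, ℓ'))) := by
        rw [Finset.disjoint_left]
        rintro x hx1 hx2
        obtain ⟨e, _, rfl⟩ := Finset.mem_image.mp hx1
        obtain ⟨ℓ', _, he⟩ := Finset.mem_image.mp hx2
        have : Fin.castSucc e.1 = Fin.last n := congrArg Prod.fst he.symm
        exact (Fin.castSucc_lt_last e.1).ne this
      rw [e1, e2, Finset.card_union_of_disjoint hdisj,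
        Finset.card_image_of_injective _ hinj1, Finset.card_image_of_injective _ hinj2,
        hE2, Finset.filter_eq']
      by_cases hS : ℓ ∈ S
      · have := hSpos ℓ hS
        simp only [hS, if_true, Finset.card_singleton]
        omega
      · simp [hS]
end
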